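/- Let δ, γ ∈ (−1, +∞) satisfy M(δ,γ) < 1, and let Φ : [0,∞) → ℝ be the unique bounded real-analytic solution of problem (P) with 0 ≤ Φ ≤ 1. Then Φ is increasing on [0,∞). -/

import Mathlib

open Real Filter Set

/-- The constant `M(δ,γ)` from the paper. -/
noncomputable def Mconst (δ γ : ℝ) : ℝ :=
  ((max 1 (1+δ)) ^ ((3:ℝ)/2) * (max 1 (1+γ)) ^ ((1:ℝ)/2) /
    ((min 1 (1+δ)) ^ ((5:ℝ)/2) * (min 1 (1+γ)) ^ ((1:ℝ)/2))) *
  (2*|δ| + |δ-γ| * (max 1 (1+δ)) / ((min 1 (1+δ)) * (min 1 (1+γ))))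

/-- `y` solves problem (P): `((1+δy)y')' + 2x(1+γy)y' = 0` on `(0,∞)`,
`y(0) = 0` and `y(x) → 1` as `x → ∞`. -/
def SolvesP (δ γ : ℝ) (y : ℝ → ℝ) : Prop :=
  (∀ x ∈ Set.Ioi (0:ℝ), DifferentiableAt ℝ y x) ∧
  (∀ x ∈ Set.Ioi (0:ℝ),
    HasDerivAt (fun t => (1 + δ * y t) * deriv y t)
      (-(2 * x * (1 + γ * y x) * deriv y x)) x) ∧
  y 0 = 0 ∧ Tendsto y atTop (nhds 1)

/-- `y` is a bounded real-analytic function on `[0,∞)`. -/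
def BddAnalytic (y : ℝ → ℝ) : Prop :=
  AnalyticOn ℝ y (Set.Ici 0) ∧ ∃ C : ℝ, ∀ x ≥ (0:ℝ), |y x| ≤ C

/-!
Writing `w = (1 + δΦ)Φ'`, the equation says `w' = c w` with the continuous coefficient
`c x = -2x(1 + γΦ(x)) / (1 + δΦ(x))`, which is defined because `0 ≤ Φ ≤ 1` and `δ > -1` give
`1 + δΦ > 0`. Hence `w · exp(-∫ c)` is constant, so `w`, and with it `Φ'`, has constant sign on
`(0,∞)`. That sign cannot be `≤ 0`: `Φ` would then decrease from `Φ(0) = 0` and could not tend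
to `1`. So `Φ' > 0` on `(0,∞)`.
-/

section LinearODE

variable {s : Set ℝ} {c w : ℝ → ℝ} {b x y : ℝ}

theorem hasDerivAt_integral_of_continuousOn (hs : IsOpen s) (hs' : IsPreconnected s)
    (hc : ContinuousOn c s) (hb : b ∈ s) (hx : x ∈ s) :
    HasDerivAt (fun u => ∫ t in b..u, c t) (c x) x :=
  intervalIntegral.integral_hasDerivAt_right
    ((hc.mono (hs'.ordConnected.uIcc_subset hb hx)).intervalIntegrable)
    (hc.stronglyMeasurableAtFilter hs x hx) (hc.continuousAt (hs.mem_nhds hx))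

theorem mul_exp_neg_integral_eq_of_hasDerivAt_eq_mul (hs : IsOpen s) (hs' : IsPreconnected s)
    (hc : ContinuousOn c s) (hw : ∀ x ∈ s, HasDerivAt w (c x * w x) x) (hb : b ∈ s)
    (hx : x ∈ s) : w x * exp (-∫ t in b..x, c t) = w b := by
  have hderiv : ∀ y ∈ s, HasDerivAt (fun u => w u * exp (-∫ t in b..u, c t)) 0 y := fun y hy =>
    ((hw y hy).mul (hasDerivAt_integral_of_continuousOn hs hs' hc hb hy).neg.exp).congr_deriv
      (by ring)
  have hconst := hs.is_const_of_deriv_eq_zero hs'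
    (fun y hy => (hderiv y hy).differentiableAt.differentiableWithinAt)
    (fun y hy => (hderiv y hy).deriv) hx hb
  simpa using hconst

theorem sign_eq_of_hasDerivAt_eq_mul (hs : IsOpen s) (hs' : IsPreconnected s)
    (hc : ContinuousOn c s) (hw : ∀ x ∈ s, HasDerivAt w (c x * w x) x) (hx : x ∈ s)
    (hy : y ∈ s) : SignType.sign (w x) = SignType.sign (w y) := by
  rw [← mul_exp_neg_integral_eq_of_hasDerivAt_eq_mul hs hs' hc hw hx hy, sign_mul,
    sign_pos (exp_pos _), mul_one]

end LinearODE

theorem strictMonoOn_Ici_of_sign_deriv_eq {f : ℝ → ℝ} {a L : ℝ} (hf : ContinuousOn f (Ici a))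
    (hdf : ∀ x ∈ Ioi a, DifferentiableAt ℝ f x)
    (hsign : ∀ x ∈ Ioi a, ∀ y ∈ Ioi a, SignType.sign (deriv f x) = SignType.sign (deriv f y))
    (hL : Tendsto f atTop (nhds L)) (haL : f a < L) :
    StrictMonoOn f (Ici a) := by
  have hb : a + 1 ∈ Ioi a := by simp
  rcases lt_or_ge 0 (deriv f (a + 1)) with hpos | hnonpos
  · refine strictMonoOn_of_deriv_pos (convex_Ici a) hf fun x hx => ?_
    rw [interior_Ici] at hx
    rw [← sign_eq_one_iff, hsign x hx _ hb, sign_pos hpos]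
  · have hdf' : DifferentiableOn ℝ f (interior (Ici a)) := by
      rw [interior_Ici]
      exact fun x hx => (hdf x hx).differentiableWithinAt
    have hanti : AntitoneOn f (Ici a) := by
      refine antitoneOn_of_deriv_nonpos (convex_Ici a) hf hdf' fun x hx => ?_
      rw [interior_Ici] at hx
      rw [← sign_nonpos_iff, hsign x hx _ hb]
      exact sign_nonpos_iff.mpr hnonpos
    have hLa : L ≤ f a :=
      le_of_tendsto hL (eventually_ge_atTop a |>.mono fun x hx =>
        hanti self_mem_Ici hx hx)
    exact absurd haL hLa.not_gt

theorem modified_error_function_increasing_general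
    (δ γ : ℝ) (hδ : -1 < δ)
    (Φ : ℝ → ℝ) (hΦa : BddAnalytic Φ) (hΦs : SolvesP δ γ Φ)
    (hΦb : ∀ x ≥ (0:ℝ), 0 ≤ Φ x ∧ Φ x ≤ 1) :
    StrictMonoOn Φ (Set.Ici 0) := by
  obtain ⟨hdiff, hode, h0, hlim⟩ := hΦs
  have hden : ∀ x ≥ (0:ℝ), 0 < 1 + δ * Φ x := fun x hx => by
    nlinarith [mul_nonneg (by linarith : (0:ℝ) ≤ δ + 1) (hΦb x hx).1, (hΦb x hx).2]
  have hcont : ContinuousOn (fun x => -(2 * x * (1 + γ * Φ x)) / (1 + δ * Φ x)) (Ioi 0) := by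
    have hΦc : ContinuousOn Φ (Ioi 0) := fun x hx => (hdiff x hx).continuousAt.continuousWithinAt
    exact ContinuousOn.div (by fun_prop) (by fun_prop) fun x hx => (hden x hx.le).ne'
  have hflux : ∀ x ∈ Ioi (0:ℝ), HasDerivAt (fun t => (1 + δ * Φ t) * deriv Φ t)
      (-(2 * x * (1 + γ * Φ x)) / (1 + δ * Φ x) * ((1 + δ * Φ x) * deriv Φ x)) x :=
    fun x hx => (hode x hx).congr_deriv (by
      rw [div_mul_eq_mul_div, eq_div_iff (hden x hx.le).ne']; ring)
  have hsign : ∀ x ∈ Ioi (0:ℝ), ∀ y ∈ Ioi (0:ℝ),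
      SignType.sign (deriv Φ x) = SignType.sign (deriv Φ y) := fun x hx y hy => by
    have := sign_eq_of_hasDerivAt_eq_mul isOpen_Ioi isPreconnected_Ioi hcont hflux hx hy
    rwa [sign_mul, sign_mul, sign_pos (hden x hx.le), sign_pos (hden y hy.le),
      one_mul, one_mul] at this
  exact strictMonoOn_Ici_of_sign_deriv_eq hΦa.1.continuousOn hdiff hsign hlim (by simp [h0])

theorem modified_error_function_increasing
    (δ γ : ℝ) (hδ : -1 < δ) (hγ : -1 < γ) (hM : Mconst δ γ < 1)
    (Φ : ℝ → ℝ) (hΦa : BddAnalytic Φ) (hΦs : SolvesP δ γ Φ)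
    (hΦb : ∀ x ≥ (0:ℝ), 0 ≤ Φ x ∧ Φ x ≤ 1) :
    StrictMonoOn Φ (Set.Ici 0) :=
  modified_error_function_increasing_general δ γ hδ Φ hΦa hΦs hΦb
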